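/- Let μ be a probability measure supported on [c, ∞)ᵈ ⊂ ℝᵈ with finite first moments, let a ∈ {1,…,d}, and let m := ∫ y_a dμ. Then the infimum of ∫ y_a dν over probability measures ν supported on [c, ∞)ᵈ with W₁(μ, ν) ≤ δ equals max{m − δ, c}. -/

import Mathlib

/-!
Under any coupling `π` of `μ` and `ν`, `∫ y_a dμ - ∫ y_a dν = ∫ (x_a - y_a) dπ ≤ ∫ ‖x - y‖₁ dπ`,
so the mean of the `a`-th coordinate drops by at most `W₁(μ, ν) ≤ δ`; it also stays `≥ c` by the
support condition. Conversely, pushing `μ` forward by the map contracting the `a`-th coordinate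
towards `c` by a factor `θ ∈ [0, 1]` moves the mean to `c + θ (m - c)` at transport cost
`(1 - θ) (m - c)`; choosing `c + θ (m - c) = max (m - δ) c` attains the bound.
-/

open MeasureTheory Finset

/-- ℓ¹ distance on ℝᵈ. -/
noncomputable def l1dist {d : ℕ} (y y' : Fin d → ℝ) : ℝ := ∑ a, |y a - y' a|

/-- 1-Wasserstein distance w.r.t. a ground cost `c`: infimum over couplings of the
expected cost. -/
noncomputable def W1 {E : Type*} [MeasurableSpace E] (c : E → E → ℝ)
    (μ ν : Measure E) : ℝ :=
  sInf {r : ℝ | ∃ π : Measure (E × E), IsProbabilityMeasure π ∧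
    π.map Prod.fst = μ ∧ π.map Prod.snd = ν ∧ ∫ p, c p.1 p.2 ∂π = r}

section Transport

variable {E : Type*} [MeasurableSpace E] {cost : E → E → ℝ} {μ ν : Measure E}

lemma W1_le_integral_of_coupling (hcost : ∀ x y, 0 ≤ cost x y) {π : Measure (E × E)}
    [IsProbabilityMeasure π] (h₁ : π.map Prod.fst = μ) (h₂ : π.map Prod.snd = ν) :
    W1 cost μ ν ≤ ∫ p, cost p.1 p.2 ∂π := by
  refine csInf_le ⟨0, ?_⟩ ⟨π, inferInstance, h₁, h₂, rfl⟩
  rintro _ ⟨π', -, -, -, rfl⟩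
  exact integral_nonneg fun p => hcost p.1 p.2

lemma W1_map_le [IsProbabilityMeasure μ] (hcost : ∀ x y, 0 ≤ cost x y)
    (hcost_meas : Measurable fun p : E × E => cost p.1 p.2) {T : E → E} (hT : Measurable T) :
    W1 cost μ (μ.map T) ≤ ∫ x, cost x (T x) ∂μ := by
  have hg : Measurable fun x => (x, T x) := measurable_id.prodMk hT
  have := Measure.isProbabilityMeasure_map (μ := μ) hg.aemeasurable
  calc W1 cost μ (μ.map T) ≤ ∫ p, cost p.1 p.2 ∂(μ.map fun x => (x, T x)) :=
        W1_le_integral_of_coupling hcost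
          (by rw [Measure.map_map measurable_fst hg]; exact Measure.map_id)
          (by rw [Measure.map_map measurable_snd hg]; rfl)
    _ = ∫ x, cost x (T x) ∂μ := integral_map hg.aemeasurable hcost_meas.aestronglyMeasurable

lemma integral_sub_integral_le_integral_cost {π : Measure (E × E)}
    (h₁ : π.map Prod.fst = μ) (h₂ : π.map Prod.snd = ν) {f : E → ℝ}
    (hfμ : Integrable f μ) (hfν : Integrable f ν) (hf : ∀ x y, f x - f y ≤ cost x y)
    (hcost : Integrable (fun p => cost p.1 p.2) π) :
    ∫ x, f x ∂μ - ∫ y, f y ∂ν ≤ ∫ p, cost p.1 p.2 ∂π := by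
  subst h₁ h₂
  have hf₁ : Integrable (fun p : E × E => f p.1) π :=
    hfμ.comp_aemeasurable measurable_fst.aemeasurable
  have hf₂ : Integrable (fun p : E × E => f p.2) π :=
    hfν.comp_aemeasurable measurable_snd.aemeasurable
  rw [integral_map measurable_fst.aemeasurable hfμ.aestronglyMeasurable,
    integral_map measurable_snd.aemeasurable hfν.aestronglyMeasurable, ← integral_sub hf₁ hf₂]
  exact integral_mono (hf₁.sub hf₂) hcost fun p => hf p.1 p.2

-- The easy half of Kantorovich–Rubinstein duality.
lemma integral_sub_integral_le_W1 [IsProbabilityMeasure μ] [IsProbabilityMeasure ν]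
    {f : E → ℝ} (hfμ : Integrable f μ) (hfν : Integrable f ν)
    (hf : ∀ x y, f x - f y ≤ cost x y)
    (hcost : ∀ π : Measure (E × E), π.map Prod.fst = μ → π.map Prod.snd = ν →
      Integrable (fun p => cost p.1 p.2) π) :
    ∫ x, f x ∂μ - ∫ y, f y ∂ν ≤ W1 cost μ ν := by
  refine le_csInf ⟨_, μ.prod ν, inferInstance, by simp, by simp, rfl⟩ ?_
  rintro _ ⟨π, -, h₁, h₂, rfl⟩
  exact integral_sub_integral_le_integral_cost h₁ h₂ hfμ hfν hf (hcost π h₁ h₂)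

end Transport

section L1

variable {d : ℕ}

lemma l1dist_nonneg (y y' : Fin d → ℝ) : 0 ≤ l1dist y y' :=
  Finset.sum_nonneg fun _ _ => abs_nonneg _

lemma measurable_l1dist : Measurable fun p : (Fin d → ℝ) × (Fin d → ℝ) => l1dist p.1 p.2 := by
  unfold l1dist
  fun_prop

lemma abs_sub_le_l1dist (y y' : Fin d → ℝ) (a : Fin d) : |y a - y' a| ≤ l1dist y y' :=
  Finset.single_le_sum (f := fun b => |y b - y' b|) (fun _ _ => abs_nonneg _) (mem_univ a)

lemma l1dist_update_right (y : Fin d → ℝ) (a : Fin d) (t : ℝ) :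
    l1dist y (Function.update y a t) = |y a - t| := by
  unfold l1dist
  rw [Finset.sum_eq_single_of_mem a (mem_univ a) fun b _ hb => by simp [hb]]
  simp

lemma integrable_l1dist_of_coupling {μ ν : Measure (Fin d → ℝ)} {π : Measure _}
    (h₁ : π.map Prod.fst = μ) (h₂ : π.map Prod.snd = ν)
    (hμ : ∀ b : Fin d, Integrable (fun y => y b) μ)
    (hν : ∀ b : Fin d, Integrable (fun y => y b) ν) :
    Integrable (fun p : (Fin d → ℝ) × (Fin d → ℝ) => l1dist p.1 p.2) π := by
  subst h₁ h₂
  refine integrable_finsetSum _ fun b _ => (Integrable.sub ?_ ?_).abs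
  · exact (hμ b).comp_aemeasurable measurable_fst.aemeasurable
  · exact (hν b).comp_aemeasurable measurable_snd.aemeasurable

end L1

lemma le_integral_of_ae_le {α : Type*} [MeasurableSpace α] {μ : Measure α}
    [IsProbabilityMeasure μ] {f : α → ℝ} {c : ℝ} (hf : Integrable f μ) (hc : ∀ᵐ x ∂μ, c ≤ f x) :
    c ≤ ∫ x, f x ∂μ := by
  simpa using integral_mono_ae (integrable_const c) hf hc

section Shrink

variable {d : ℕ} (a : Fin d) (c θ : ℝ)

noncomputable def shrinkCoord (y : Fin d → ℝ) : Fin d → ℝ :=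
  Function.update y a (c + θ * (y a - c))

variable {a c θ}

lemma measurable_shrinkCoord : Measurable (shrinkCoord a c θ) := by
  unfold shrinkCoord
  fun_prop

lemma shrinkCoord_ge (hθ : 0 ≤ θ) {y : Fin d → ℝ} (hy : ∀ i, c ≤ y i) (i : Fin d) :
    c ≤ shrinkCoord a c θ y i := by
  rcases eq_or_ne i a with rfl | hi
  · simpa [shrinkCoord] using mul_nonneg hθ (sub_nonneg.2 (hy i))
  · simpa [shrinkCoord, hi] using hy i

lemma l1dist_shrinkCoord (hθ : θ ≤ 1) {y : Fin d → ℝ} (hy : c ≤ y a) :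
    l1dist y (shrinkCoord a c θ y) = (1 - θ) * (y a - c) := by
  rw [shrinkCoord, l1dist_update_right, abs_of_nonneg] <;> nlinarith

variable {μ : Measure (Fin d → ℝ)}

lemma integrable_shrinkCoord_apply [IsFiniteMeasure μ]
    (hμ : ∀ b : Fin d, Integrable (fun y => y b) μ) (b : Fin d) :
    Integrable (fun y => shrinkCoord a c θ y b) μ := by
  rcases eq_or_ne b a with rfl | hb
  · simpa [shrinkCoord] using
      (integrable_const c).add (((hμ b).sub (integrable_const c)).const_mul θ)
  · simpa [shrinkCoord, hb] using hμ b

lemma integral_shrinkCoord_apply_self [IsProbabilityMeasure μ]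
    (hμ : Integrable (fun y => y a) μ) :
    ∫ y, shrinkCoord a c θ y a ∂μ = c + θ * (∫ y, y a ∂μ - c) := by
  have hlin : Integrable (fun y => θ * (y a - c)) μ := (hμ.sub (integrable_const c)).const_mul θ
  simp only [shrinkCoord, Function.update_self]
  rw [integral_add (integrable_const c) hlin, integral_const_mul,
    integral_sub hμ (integrable_const c)]
  simp

lemma W1_map_shrinkCoord_le [IsProbabilityMeasure μ] (hθ : θ ≤ 1)
    (hμ : Integrable (fun y => y a) μ) (hsupp : ∀ᵐ y ∂μ, c ≤ y a) :
    W1 l1dist μ (μ.map (shrinkCoord a c θ)) ≤ (1 - θ) * (∫ y, y a ∂μ - c) :=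
  calc W1 l1dist μ (μ.map (shrinkCoord a c θ))
      _ ≤ ∫ y, l1dist y (shrinkCoord a c θ y) ∂μ :=
        W1_map_le l1dist_nonneg measurable_l1dist measurable_shrinkCoord
      _ = ∫ y, (1 - θ) * (y a - c) ∂μ :=
        integral_congr_ae (hsupp.mono fun y hy => l1dist_shrinkCoord hθ hy)
      _ = (1 - θ) * (∫ y, y a ∂μ - c) := by
        rw [integral_const_mul, integral_sub hμ (integrable_const c)]
        simp

end Shrink

lemma exists_add_mul_sub_eq {c m t : ℝ} (hct : c ≤ t) (htm : t ≤ m) :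
    ∃ θ : ℝ, 0 ≤ θ ∧ θ ≤ 1 ∧ c + θ * (m - c) = t :=
  ⟨(t - c) / (m - c), div_nonneg (by linarith) (by linarith),
    div_le_one_of_le₀ (by linarith) (by linarith),
    by rw [div_mul_cancel_of_imp fun h => by linarith]; ring⟩

theorem stmt_5 {d : ℕ} (μ : Measure (Fin d → ℝ)) [IsProbabilityMeasure μ]
    (hμ : ∀ b : Fin d, Integrable (fun y => y b) μ)
    (c : ℝ) (hsupp : ∀ᵐ y ∂μ, ∀ i, c ≤ y i)
    (a : Fin d) (m : ℝ) (hm : m = ∫ y, y a ∂μ)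
    (δ : ℝ) (hδ : 0 ≤ δ) :
    sInf {r : ℝ | ∃ ν : Measure (Fin d → ℝ), IsProbabilityMeasure ν ∧
        (∀ b : Fin d, Integrable (fun y => y b) ν) ∧
        (∀ᵐ y ∂ν, ∀ i, c ≤ y i) ∧
        W1 l1dist μ ν ≤ δ ∧ (∫ y, y a ∂ν) = r}
      = max (m - δ) c := by
  subst hm
  have hcm : c ≤ ∫ y, y a ∂μ := le_integral_of_ae_le (hμ a) (hsupp.mono fun y hy => hy a)
  refine IsLeast.csInf_eq ⟨?_, ?_⟩
  · obtain ⟨θ, hθ₀, hθ₁, hθ⟩ :=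
      exists_add_mul_sub_eq (le_max_right (∫ y, y a ∂μ - δ) c) (max_le (by linarith) hcm)
    have hT := measurable_shrinkCoord (a := a) (c := c) (θ := θ)
    refine ⟨μ.map (shrinkCoord a c θ), Measure.isProbabilityMeasure_map hT.aemeasurable,
      fun b => ?_, ?_, ?_, ?_⟩
    · exact (integrable_map_measure (measurable_pi_apply b).aestronglyMeasurable
        hT.aemeasurable).2 (integrable_shrinkCoord_apply hμ b)
    · exact (ae_map_iff hT.aemeasurable (measurableSet_setOfPred.2 (by fun_prop))).2
        (hsupp.mono fun y hy => shrinkCoord_ge hθ₀ hy)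
    · calc W1 l1dist μ (μ.map (shrinkCoord a c θ))
          _ ≤ (1 - θ) * (∫ y, y a ∂μ - c) :=
            W1_map_shrinkCoord_le hθ₁ (hμ a) (hsupp.mono fun y hy => hy a)
          _ ≤ δ := by linarith [le_max_left (∫ y, y a ∂μ - δ) c]
    · rw [integral_map hT.aemeasurable (measurable_pi_apply a).aestronglyMeasurable,
        integral_shrinkCoord_apply_self (hμ a), hθ]
  · rintro _ ⟨ν, hν, hνint, hνsupp, hW, rfl⟩
    have hgap : ∫ y, y a ∂μ - ∫ y, y a ∂ν ≤ W1 l1dist μ ν :=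
      integral_sub_integral_le_W1 (hμ a) (hνint a)
        (fun x y => (le_abs_self _).trans (abs_sub_le_l1dist x y a))
        (fun π h₁ h₂ => integrable_l1dist_of_coupling h₁ h₂ hμ hνint)
    exact max_le (by linarith) (le_integral_of_ae_le (hνint a) (hνsupp.mono fun y hy => hy a))
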